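/- (Ill-conditioning under scaling) Let a > 0, suppose W1 is invertible (so σ_min(W1) > 0), and suppose the Hessian of ℓ at the scaled point (a⁻¹ W1, a W2) is positive definite, i.e., λ_min(a⁻¹ W1, a W2) > 0. Then the condition number of this Hessian satisfies λ_max(a⁻¹ W1, a W2) / λ_min(a⁻¹ W1, a W2) ≥ a⁴ · σ_max(W2)² / σ_min(W1)². In particular, the condition number grows at least as a⁴. -/

import Mathlib

open Matrix

/-- Squared Frobenius norm. -/
def froSq {d : ℕ} (A : Matrix (Fin d) (Fin d) ℝ) : ℝ :=
  ∑ i, ∑ j, (A i j) ^ 2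

/-- The matrix-factorization loss ℓ(A, B) = ‖A B − M‖_F². -/
def loss {d : ℕ} (M A B : Matrix (Fin d) (Fin d) ℝ) : ℝ :=
  froSq (A * B - M)

/-- The Hessian quadratic form of ℓ at `(A, B)` in direction `(E1, E2)`:
`Q_{(A,B)}(E1, E2) = (d²/dt²)|_{t=0} ℓ(A + t E1, B + t E2)`. -/
noncomputable def hessQ {d : ℕ} (M A B E1 E2 : Matrix (Fin d) (Fin d) ℝ) : ℝ :=
  iteratedDeriv 2 (fun t : ℝ => loss M (A + t • E1) (B + t • E2)) 0

/-- Largest Rayleigh value of the Hessian of ℓ at `(A, B)`. -/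
noncomputable def lamMax {d : ℕ} (M A B : Matrix (Fin d) (Fin d) ℝ) : ℝ :=
  sSup {q : ℝ | ∃ E1 E2 : Matrix (Fin d) (Fin d) ℝ,
    froSq E1 + froSq E2 = 1 ∧ q = hessQ M A B E1 E2}

/-- Smallest Rayleigh value of the Hessian of ℓ at `(A, B)`. -/
noncomputable def lamMin {d : ℕ} (M A B : Matrix (Fin d) (Fin d) ℝ) : ℝ :=
  sInf {q : ℝ | ∃ E1 E2 : Matrix (Fin d) (Fin d) ℝ,
    froSq E1 + froSq E2 = 1 ∧ q = hessQ M A B E1 E2}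

/-- Euclidean (ℓ₂) norm of a vector in ℝ^d. -/
noncomputable def euclNorm {d : ℕ} (x : Fin d → ℝ) : ℝ :=
  Real.sqrt (∑ i, (x i) ^ 2)

/-- The largest singular value of `W`: `sup_{‖x‖₂ = 1} ‖W x‖₂`. -/
noncomputable def sigmaMax {d : ℕ} (W : Matrix (Fin d) (Fin d) ℝ) : ℝ :=
  sSup {y : ℝ | ∃ x : Fin d → ℝ, euclNorm x = 1 ∧ y = euclNorm (W.mulVec x)}

/-- The smallest singular value of `W`: `min_{‖x‖₂ = 1} ‖W x‖₂`. -/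
noncomputable def sigmaMin {d : ℕ} (W : Matrix (Fin d) (Fin d) ℝ) : ℝ :=
  sInf {y : ℝ | ∃ x : Fin d → ℝ, euclNorm x = 1 ∧ y = euclNorm (W.mulVec x)}

/-! The Hessian form is `Q(E₁, E₂) = 2‖A E₂ + E₁ B‖² + 4⟨A B - M, E₁ E₂⟩`. In the rank-one
directions `(0, x eᵀ)` and `(e vᵀ, 0)` the cross term vanishes and `Q` equals `2‖A x‖²`, resp.
`2‖Bᵀ v‖²`, so `λ_min(A, B) ≤ 2 σ_min(A)²` and `λ_max(A, B) ≥ 2 σ_max(B)²`. At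
`(a⁻¹ W₁, a W₂)` the ratio of these two bounds is `a⁴ σ_max(W₂)² / σ_min(W₁)²`. -/

section

open scoped Pointwise

variable {d : ℕ}

def frobInner (A B : Matrix (Fin d) (Fin d) ℝ) : ℝ :=
  ∑ i, ∑ j, A i j * B i j

def sphereNorms (W : Matrix (Fin d) (Fin d) ℝ) : Set ℝ :=
  {y : ℝ | ∃ x : Fin d → ℝ, euclNorm x = 1 ∧ y = euclNorm (W *ᵥ x)}

def hessSet (M A B : Matrix (Fin d) (Fin d) ℝ) : Set ℝ :=
  {q : ℝ | ∃ E1 E2 : Matrix (Fin d) (Fin d) ℝ,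
    froSq E1 + froSq E2 = 1 ∧ q = hessQ M A B E1 E2}

lemma froSq_nonneg (A : Matrix (Fin d) (Fin d) ℝ) : 0 ≤ froSq A := by
  unfold froSq; positivity

lemma froSq_mul_le (A B : Matrix (Fin d) (Fin d) ℝ) : froSq (A * B) ≤ froSq A * froSq B := by
  simp only [froSq, mul_apply]
  calc ∑ i, ∑ j, (∑ k, A i k * B k j) ^ 2
      ≤ ∑ i, ∑ j, (∑ k, A i k ^ 2) * ∑ k, B k j ^ 2 := by
        gcongr with i _ j _; exact Finset.sum_mul_sq_le_sq_mul_sq _ _ _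
    _ = (∑ i, ∑ k, A i k ^ 2) * ∑ j, ∑ k, B k j ^ 2 := by rw [Finset.sum_mul_sum]
    _ = (∑ i, ∑ k, A i k ^ 2) * ∑ k, ∑ j, B k j ^ 2 := by
        rw [Finset.sum_comm (f := fun j k => B k j ^ 2)]

lemma froSq_add_le (A B : Matrix (Fin d) (Fin d) ℝ) :
    froSq (A + B) ≤ 2 * (froSq A + froSq B) := by
  simp only [froSq, Matrix.add_apply, Finset.mul_sum, ← Finset.sum_add_distrib]
  gcongr with i _ j _
  nlinarith [sq_nonneg (A i j - B i j)]

lemma two_mul_abs_frobInner_le (A B : Matrix (Fin d) (Fin d) ℝ) :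
    2 * |frobInner A B| ≤ froSq A + froSq B := by
  simp only [frobInner, froSq, ← Finset.sum_add_distrib]
  refine (mul_le_mul_of_nonneg_left ((Finset.abs_sum_le_sum_abs _ _).trans
    (Finset.sum_le_sum fun i _ => Finset.abs_sum_le_sum_abs _ _)) zero_le_two).trans ?_
  simp only [Finset.mul_sum]
  gcongr with i _ j _
  rw [abs_mul]
  nlinarith [sq_nonneg (|A i j| - |B i j|), sq_abs (A i j), sq_abs (B i j)]

lemma euclNorm_nonneg (x : Fin d → ℝ) : 0 ≤ euclNorm x := Real.sqrt_nonneg _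

lemma euclNorm_sq (x : Fin d → ℝ) : euclNorm x ^ 2 = ∑ i, x i ^ 2 :=
  Real.sq_sqrt (by positivity)

lemma euclNorm_smul (c : ℝ) (x : Fin d → ℝ) : euclNorm (c • x) = |c| * euclNorm x := by
  simp only [euclNorm, Pi.smul_apply, smul_eq_mul, mul_pow, ← Finset.mul_sum]
  rw [Real.sqrt_mul (sq_nonneg c), Real.sqrt_sq_eq_abs]

lemma dotProduct_le_euclNorm_mul (x y : Fin d → ℝ) : x ⬝ᵥ y ≤ euclNorm x * euclNorm y :=
  Real.sum_mul_le_sqrt_mul_sqrt _ _ _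

lemma exists_euclNorm_eq_one (hd : 0 < d) : ∃ e : Fin d → ℝ, euclNorm e = 1 :=
  ⟨Pi.single ⟨0, hd⟩ 1, by simp [euclNorm, Pi.single_apply]⟩

lemma froSq_vecMulVec (x y : Fin d → ℝ) :
    froSq (vecMulVec x y) = euclNorm x ^ 2 * euclNorm y ^ 2 := by
  simp [froSq, vecMulVec_apply, mul_pow, euclNorm_sq, Finset.sum_mul_sum]

lemma le_sq_sigmaMin {W : Matrix (Fin d) (Fin d) ℝ} {c : ℝ} (hd : 0 < d)
    (h : ∀ x, euclNorm x = 1 → c ≤ euclNorm (W *ᵥ x) ^ 2) : c ≤ sigmaMin W ^ 2 := by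
  rcases le_or_gt c 0 with hc | hc
  · exact hc.trans (sq_nonneg _)
  obtain ⟨e, he⟩ := exists_euclNorm_eq_one hd
  have hsqrt : √c ≤ sigmaMin W := by
    refine le_csInf ⟨_, e, he, rfl⟩ ?_
    rintro _ ⟨x, hx, rfl⟩
    exact Real.sqrt_le_iff.mpr ⟨euclNorm_nonneg _, h x hx⟩
  simpa [Real.sq_sqrt hc.le] using pow_le_pow_left₀ (Real.sqrt_nonneg c) hsqrt 2

lemma sq_sigmaMax_le {W : Matrix (Fin d) (Fin d) ℝ} {c : ℝ} (hd : 0 < d)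
    (h : ∀ x, euclNorm x = 1 → euclNorm (W *ᵥ x) ^ 2 ≤ c) : sigmaMax W ^ 2 ≤ c := by
  obtain ⟨e, he⟩ := exists_euclNorm_eq_one hd
  have hbound : ∀ y ∈ sphereNorms W, y ≤ √c := by
    rintro _ ⟨x, hx, rfl⟩
    exact Real.le_sqrt_of_sq_le (h x hx)
  have hc : 0 ≤ c := (sq_nonneg _).trans (h e he)
  have hnonneg : 0 ≤ sigmaMax W :=
    (euclNorm_nonneg _).trans (le_csSup ⟨√c, hbound⟩ ⟨e, he, rfl⟩)
  simpa [Real.sq_sqrt hc] using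
    pow_le_pow_left₀ hnonneg (csSup_le ⟨_, e, he, rfl⟩ hbound) 2

lemma sphereNorms_smul (c : ℝ) (W : Matrix (Fin d) (Fin d) ℝ) :
    sphereNorms (c • W) = |c| • sphereNorms W := by
  ext y
  simp [sphereNorms, Set.mem_smul_set, smul_mulVec, euclNorm_smul, eq_comm]

lemma sigmaMin_smul (c : ℝ) (W : Matrix (Fin d) (Fin d) ℝ) :
    sigmaMin (c • W) = |c| * sigmaMin W := by
  change sInf (sphereNorms (c • W)) = |c| * sInf (sphereNorms W)
  rw [sphereNorms_smul, Real.sInf_smul_of_nonneg (abs_nonneg c), smul_eq_mul]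

lemma sigmaMax_smul (c : ℝ) (W : Matrix (Fin d) (Fin d) ℝ) :
    sigmaMax (c • W) = |c| * sigmaMax W := by
  change sSup (sphereNorms (c • W)) = |c| * sSup (sphereNorms W)
  rw [sphereNorms_smul, Real.sSup_smul_of_nonneg (abs_nonneg c), smul_eq_mul]

lemma iteratedDeriv_two_quartic (c₀ c₁ c₂ c₃ c₄ : ℝ) :
    iteratedDeriv 2 (fun t : ℝ => c₀ + c₁ * t + c₂ * t ^ 2 + c₃ * t ^ 3 + c₄ * t ^ 4) 0 =
      2 * c₂ := by
  have hderiv : deriv (fun t : ℝ => c₀ + c₁ * t + c₂ * t ^ 2 + c₃ * t ^ 3 + c₄ * t ^ 4) =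
      fun t => c₁ + c₂ * (2 * t) + c₃ * (3 * t ^ 2) + c₄ * (4 * t ^ 3) := by
    ext t
    simp (disch := fun_prop)
  rw [iteratedDeriv_succ, iteratedDeriv_one, hderiv]
  simp (disch := fun_prop) only [deriv_fun_add, deriv_const', deriv_fun_mul,
    deriv_const_mul_id', deriv_fun_pow, deriv_id'']
  ring

lemma add_smul_mul_add_smul_sub (M A B E1 E2 : Matrix (Fin d) (Fin d) ℝ) (t : ℝ) :
    (A + t • E1) * (B + t • E2) - M =
      (A * B - M) + t • (A * E2 + E1 * B) + t ^ 2 • (E1 * E2) := by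
  simp only [add_mul, mul_add, Matrix.smul_mul, Matrix.mul_smul, smul_smul, smul_add, ← sq]
  abel

lemma froSq_add_smul_add_sq_smul (R S T : Matrix (Fin d) (Fin d) ℝ) (t : ℝ) :
    froSq (R + t • S + t ^ 2 • T) =
      froSq R + 2 * frobInner R S * t + (froSq S + 2 * frobInner R T) * t ^ 2 +
        2 * frobInner S T * t ^ 3 + froSq T * t ^ 4 := by
  simp only [froSq, frobInner, Matrix.add_apply, Matrix.smul_apply, smul_eq_mul,
    Finset.sum_mul, Finset.mul_sum, ← Finset.sum_add_distrib]
  refine Finset.sum_congr rfl fun i _ => Finset.sum_congr rfl fun j _ => ?_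
  ring

lemma hessQ_eq (M A B E1 E2 : Matrix (Fin d) (Fin d) ℝ) :
    hessQ M A B E1 E2 = 2 * froSq (A * E2 + E1 * B) + 4 * frobInner (A * B - M) (E1 * E2) := by
  simp only [hessQ, loss, add_smul_mul_add_smul_sub, froSq_add_smul_add_sq_smul,
    iteratedDeriv_two_quartic]
  ring

lemma hessQ_zero_left (M A B E : Matrix (Fin d) (Fin d) ℝ) :
    hessQ M A B 0 E = 2 * froSq (A * E) := by
  simp [hessQ_eq, frobInner]

lemma hessQ_zero_right (M A B E : Matrix (Fin d) (Fin d) ℝ) :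
    hessQ M A B E 0 = 2 * froSq (E * B) := by
  simp [hessQ_eq, frobInner]

lemma hessSet_subset_Icc (M A B : Matrix (Fin d) (Fin d) ℝ) :
    hessSet M A B ⊆ Set.Icc (-(2 * froSq (A * B - M) + 2))
      (4 * (froSq A + froSq B) + 2 * froSq (A * B - M) + 2) := by
  rintro _ ⟨E1, E2, hE, rfl⟩
  have hE1 : froSq E1 ≤ 1 := by linarith [froSq_nonneg E2]
  have hE2 : froSq E2 ≤ 1 := by linarith [froSq_nonneg E1]
  have hlin : froSq (A * E2 + E1 * B) ≤ 2 * (froSq A + froSq B) :=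
    calc froSq (A * E2 + E1 * B)
        ≤ 2 * (froSq A * froSq E2 + froSq E1 * froSq B) := by
          refine (froSq_add_le _ _).trans ?_
          gcongr <;> exact froSq_mul_le _ _
      _ ≤ 2 * (froSq A + froSq B) := by
          gcongr
          · exact mul_le_of_le_one_right (froSq_nonneg A) hE2
          · exact mul_le_of_le_one_left (froSq_nonneg B) hE1
  have hquad : froSq (E1 * E2) ≤ 1 :=
    (froSq_mul_le _ _).trans (mul_le_one₀ hE1 (froSq_nonneg _) hE2)
  have hcross := two_mul_abs_frobInner_le (A * B - M) (E1 * E2)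
  have hsq_nonneg := froSq_nonneg (A * E2 + E1 * B)
  rw [hessQ_eq]
  constructor <;>
    linarith [le_abs_self (frobInner (A * B - M) (E1 * E2)),
      neg_abs_le (frobInner (A * B - M) (E1 * E2))]

lemma hessQ_le_lamMax (M A B : Matrix (Fin d) (Fin d) ℝ) {E1 E2 : Matrix (Fin d) (Fin d) ℝ}
    (hE : froSq E1 + froSq E2 = 1) : hessQ M A B E1 E2 ≤ lamMax M A B :=
  le_csSup (bddAbove_Icc.mono (hessSet_subset_Icc M A B)) ⟨E1, E2, hE, rfl⟩

lemma lamMin_le_hessQ (M A B : Matrix (Fin d) (Fin d) ℝ) {E1 E2 : Matrix (Fin d) (Fin d) ℝ}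
    (hE : froSq E1 + froSq E2 = 1) : lamMin M A B ≤ hessQ M A B E1 E2 :=
  csInf_le (bddBelow_Icc.mono (hessSet_subset_Icc M A B)) ⟨E1, E2, hE, rfl⟩

lemma pos_of_lamMin_ne_zero {M A B : Matrix (Fin d) (Fin d) ℝ} (h : lamMin M A B ≠ 0) :
    0 < d := by
  rcases Nat.eq_zero_or_pos d with rfl | hd
  · -- for `d = 0` every `froSq` vanishes, so the Rayleigh set is empty and `sInf ∅ = 0`
    simp [lamMin, froSq] at h
  · exact hd

lemma lamMin_le_two_mul_sq_euclNorm_mulVec (M A B : Matrix (Fin d) (Fin d) ℝ)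
    {x e : Fin d → ℝ} (hx : euclNorm x = 1) (he : euclNorm e = 1) :
    lamMin M A B ≤ 2 * euclNorm (A *ᵥ x) ^ 2 := by
  have hE : froSq (0 : Matrix (Fin d) (Fin d) ℝ) + froSq (vecMulVec x e) = 1 := by
    rw [froSq_vecMulVec, hx, he]
    simp [froSq]
  simpa [hessQ_zero_left, mul_vecMulVec, froSq_vecMulVec, he] using lamMin_le_hessQ M A B hE

lemma two_mul_sq_euclNorm_vecMul_le_lamMax (M A B : Matrix (Fin d) (Fin d) ℝ)
    {v e : Fin d → ℝ} (hv : euclNorm v = 1) (he : euclNorm e = 1) :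
    2 * euclNorm (v ᵥ* B) ^ 2 ≤ lamMax M A B := by
  have hE : froSq (vecMulVec e v) + froSq (0 : Matrix (Fin d) (Fin d) ℝ) = 1 := by
    rw [froSq_vecMulVec, hv, he]
    simp [froSq]
  simpa [hessQ_zero_right, vecMulVec_mul, froSq_vecMulVec, he] using hessQ_le_lamMax M A B hE

lemma exists_euclNorm_mulVec_le_euclNorm_vecMul (W : Matrix (Fin d) (Fin d) ℝ)
    {x e : Fin d → ℝ} (hx : euclNorm x = 1) (he : euclNorm e = 1) :
    ∃ v, euclNorm v = 1 ∧ euclNorm (W *ᵥ x) ≤ euclNorm (v ᵥ* W) := by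
  rcases (euclNorm_nonneg (W *ᵥ x)).eq_or_lt with hm | hm
  · exact ⟨e, he, hm ▸ euclNorm_nonneg _⟩
  set m := euclNorm (W *ᵥ x)
  have hself : (W *ᵥ x) ⬝ᵥ (W *ᵥ x) = m ^ 2 := by
    simp only [dotProduct, ← sq, m, euclNorm_sq]
  refine ⟨m⁻¹ • (W *ᵥ x), by rw [euclNorm_smul, abs_inv, abs_of_pos hm, inv_mul_cancel₀ hm.ne'], ?_⟩
  calc m = m⁻¹ • (W *ᵥ x) ⬝ᵥ (W *ᵥ x) := by
        rw [smul_dotProduct, hself, smul_eq_mul]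
        field_simp
    _ = (m⁻¹ • (W *ᵥ x)) ᵥ* W ⬝ᵥ x := dotProduct_mulVec _ _ _
    _ ≤ euclNorm ((m⁻¹ • (W *ᵥ x)) ᵥ* W) * euclNorm x := dotProduct_le_euclNorm_mul _ _
    _ = euclNorm ((m⁻¹ • (W *ᵥ x)) ᵥ* W) := by rw [hx, mul_one]

lemma lamMin_le_two_mul_sq_sigmaMin (M A B : Matrix (Fin d) (Fin d) ℝ) (hd : 0 < d) :
    lamMin M A B ≤ 2 * sigmaMin A ^ 2 := by
  obtain ⟨e, he⟩ := exists_euclNorm_eq_one hd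
  have := le_sq_sigmaMin (W := A) (c := lamMin M A B / 2) hd fun x hx => by
    linarith [lamMin_le_two_mul_sq_euclNorm_mulVec M A B hx he]
  linarith

lemma two_mul_sq_sigmaMax_le_lamMax (M A B : Matrix (Fin d) (Fin d) ℝ) (hd : 0 < d) :
    2 * sigmaMax B ^ 2 ≤ lamMax M A B := by
  obtain ⟨e, he⟩ := exists_euclNorm_eq_one hd
  have := sq_sigmaMax_le (W := B) (c := lamMax M A B / 2) hd fun x hx => by
    obtain ⟨v, hv, hxv⟩ := exists_euclNorm_mulVec_le_euclNorm_vecMul B hx he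
    have := pow_le_pow_left₀ (euclNorm_nonneg _) hxv 2
    linarith [two_mul_sq_euclNorm_vecMul_le_lamMax M A B hv he]
  linarith

end

theorem condition_number_scaling_general (d : ℕ)
    (M W1 W2 : Matrix (Fin d) (Fin d) ℝ) (a : ℝ)
    (hpd : 0 < lamMin M (a⁻¹ • W1) (a • W2)) :
    a ^ 4 * sigmaMax W2 ^ 2 / sigmaMin W1 ^ 2 ≤
      lamMax M (a⁻¹ • W1) (a • W2) / lamMin M (a⁻¹ • W1) (a • W2) := by
  have hd : 0 < d := pos_of_lamMin_ne_zero hpd.ne'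
  have hmin : lamMin M (a⁻¹ • W1) (a • W2) ≤ 2 * (a⁻¹ ^ 2 * sigmaMin W1 ^ 2) := by
    simpa [sigmaMin_smul, mul_pow] using lamMin_le_two_mul_sq_sigmaMin M (a⁻¹ • W1) (a • W2) hd
  have hmax : 2 * (a ^ 2 * sigmaMax W2 ^ 2) ≤ lamMax M (a⁻¹ • W1) (a • W2) := by
    simpa [sigmaMax_smul, mul_pow] using two_mul_sq_sigmaMax_le_lamMax M (a⁻¹ • W1) (a • W2) hd
  have hden : 0 < a⁻¹ ^ 2 * sigmaMin W1 ^ 2 := by linarith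
  have ha : a ≠ 0 := by rintro rfl; simp at hden
  calc a ^ 4 * sigmaMax W2 ^ 2 / sigmaMin W1 ^ 2
      = 2 * (a ^ 2 * sigmaMax W2 ^ 2) / (2 * (a⁻¹ ^ 2 * sigmaMin W1 ^ 2)) := by
        field_simp
    _ ≤ 2 * (a ^ 2 * sigmaMax W2 ^ 2) / lamMin M (a⁻¹ • W1) (a • W2) :=
        div_le_div_of_nonneg_left (by positivity) hpd hmin
    _ ≤ lamMax M (a⁻¹ • W1) (a • W2) / lamMin M (a⁻¹ • W1) (a • W2) := by gcongr

/-- Ill-conditioning under scaling: if `W1` is invertible and the Hessian of ℓ at the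
scaled point `(a⁻¹ W1, a W2)` is positive definite, then its condition number satisfies
`λ_max / λ_min ≥ a⁴ σ_max(W2)² / σ_min(W1)²`. -/
theorem condition_number_scaling (d : ℕ) (hd : 0 < d)
    (M W1 W2 : Matrix (Fin d) (Fin d) ℝ) (a : ℝ) (ha : 0 < a)
    (hW1 : IsUnit W1)
    (hpd : 0 < lamMin M (a⁻¹ • W1) (a • W2)) :
    a ^ 4 * sigmaMax W2 ^ 2 / sigmaMin W1 ^ 2 ≤
      lamMax M (a⁻¹ • W1) (a • W2) / lamMin M (a⁻¹ • W1) (a • W2) :=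
  condition_number_scaling_general d M W1 W2 a hpd
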